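/- Let X be an open (complete, noncompact, boundaryless) Alexandrov space of nonnegative curvature, and let f be the Cheeger–Gromoll function f(x) = lim_{t→∞}[t - d(x, ∂B(x₀,t))]. Then every sublevel set Ω_c = f⁻¹((-∞,c]) with c ≥ f(x₀) is compact. -/

import Mathlib

open Set Metric Filter

/-- `γ` restricted to `[a,b]` is a unit-speed minimizing geodesic segment. -/
def IsGeodesicOn {X : Type*} [MetricSpace X] (γ : ℝ → X) (a b : ℝ) : Prop :=
  ∀ s ∈ Set.Icc a b, ∀ t ∈ Set.Icc a b, dist (γ s) (γ t) = |s - t|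

/-- Nonnegative curvature in the comparison sense. -/
def NonnegCurv (X : Type*) [MetricSpace X] : Prop :=
  ∀ (γ : ℝ → X) (a b : ℝ), a < b → IsGeodesicOn γ a b →
    ∀ x : X, ∀ t ∈ Set.Icc a b,
      (1 - (t - a) / (b - a)) * (dist x (γ a)) ^ 2 +
        ((t - a) / (b - a)) * (dist x (γ b)) ^ 2 - (t - a) * (b - t) ≤
      (dist x (γ t)) ^ 2

/-!
The approximants `t - d(·, ∂B(x₀,t))` are 1-Lipschitz, so `f` is continuous and `Ω_c` is closed.
Applying the comparison inequality at the point of `∂B(x₀,T)` nearest to `γ t` shows that the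
approximants are convex along a geodesic `γ` up to an error `O(1/T)`; hence `f` is convex along geodesics and `Ω_c` is star-shaped about `x₀`. If `Ω_c` were
unbounded, geodesic segments from `x₀` inside `Ω_c` of every length would subconverge to a ray
`φ` from `x₀` inside `Ω_c`; but along a ray `f (φ s) ≥ s`, contradicting `f ≤ c` on `Ω_c`.
-/

open Topology

-- Rays are sampled at the integers so that the space `ℕ → X` of candidates is first countable.
def IsDiscreteRay {X : Type*} [MetricSpace X] (φ : ℕ → X) : Prop :=
  ∀ j k : ℕ, dist (φ j) (φ k) = |(j : ℝ) - k|

def IsGeodesicallyStarShaped {X : Type*} [MetricSpace X] (s : Set X) (x₀ : X) : Prop :=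
  ∀ (γ : ℝ → X) (L : ℝ), IsGeodesicOn γ 0 L → γ 0 = x₀ → γ L ∈ s → ∀ t ∈ Icc 0 L, γ t ∈ s

theorem sub_div_le_of_sq_sub_le {M K D : ℝ} (hM : 0 < M) (hK : 0 ≤ K) (hD : 0 ≤ D)
    (h : M ^ 2 - K ≤ D ^ 2) : M - K / M ≤ D := by
  rcases le_or_gt (M - K / M) 0 with hneg | hpos
  · linarith
  have hq : K / M * M = K := div_mul_cancel₀ K hM.ne'
  have hq0 : 0 ≤ K / M := div_nonneg hK hM.le
  have hsq : (M - K / M) ^ 2 ≤ D ^ 2 := by nlinarith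
  exact (pow_le_pow_iff_left₀ hpos.le hD two_ne_zero).1 hsq

section

variable {X : Type*} [MetricSpace X]

theorem IsGeodesicOn.mono {γ : ℝ → X} {a b a' b' : ℝ} (hγ : IsGeodesicOn γ a b)
    (ha : a ≤ a') (hb : b' ≤ b) : IsGeodesicOn γ a' b' :=
  fun s hs t ht => hγ s ⟨ha.trans hs.1, hs.2.trans hb⟩ t ⟨ha.trans ht.1, ht.2.trans hb⟩

theorem IsGeodesicOn.dist_apply_zero {γ : ℝ → X} {L t : ℝ} (hγ : IsGeodesicOn γ 0 L)
    (ht : t ∈ Icc 0 L) : dist (γ 0) (γ t) = t := by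
  rw [hγ 0 ⟨le_rfl, ht.1.trans ht.2⟩ t ht, zero_sub, abs_neg, abs_of_nonneg ht.1]

theorem exists_le_dist_of_not_compactSpace [ProperSpace X] (hnc : ¬ CompactSpace X) (x₀ : X)
    (R : ℝ) : ∃ y, R ≤ dist x₀ y := by
  by_contra! h
  exact hnc ⟨(isCompact_closedBall x₀ R).of_isClosed_subset isClosed_univ
    fun y _ => mem_closedBall'.2 (h y).le⟩

theorem sphere_nonempty_of_geodesic [ProperSpace X] (hnc : ¬ CompactSpace X)
    (hgeo : ∀ x y : X, ∃ γ : ℝ → X,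
      IsGeodesicOn γ 0 (dist x y) ∧ γ 0 = x ∧ γ (dist x y) = y)
    (x₀ : X) {t : ℝ} (ht : 0 ≤ t) : (sphere x₀ t).Nonempty := by
  obtain ⟨y, hy⟩ := exists_le_dist_of_not_compactSpace hnc x₀ t
  obtain ⟨γ, hγ, hγ0, -⟩ := hgeo x₀ y
  exact ⟨γ t, mem_sphere'.2 (hγ0 ▸ hγ.dist_apply_zero ⟨ht, hy⟩)⟩

theorem sub_dist_le_infDist_sphere {x₀ y : X} {T : ℝ} (hne : (sphere x₀ T).Nonempty) :
    T - dist x₀ y ≤ infDist y (sphere x₀ T) :=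
  (le_infDist hne).2 fun z hz => by
    linarith [mem_sphere'.1 hz, dist_triangle x₀ y z]

theorem lipschitzWith_one_of_tendsto_sub_infDist_sphere (x₀ : X) {f : X → ℝ}
    (hf : ∀ x, Tendsto (fun t : ℝ => t - infDist x (sphere x₀ t)) atTop (𝓝 (f x))) :
    LipschitzWith 1 f := by
  refine LipschitzWith.of_dist_le_mul fun x y => ?_
  rw [NNReal.coe_one, one_mul, Real.dist_eq]
  refine le_of_tendsto ((hf x).sub (hf y)).abs (Eventually.of_forall fun t => ?_)
  rw [sub_sub_sub_cancel_left, ← Real.dist_eq, dist_comm x y]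
  simpa using (lipschitz_infDist_pt (sphere x₀ t)).dist_le_mul y x

theorem NonnegCurv.sq_sub_le_dist_sq (hcurv : NonnegCurv X) {γ : ℝ → X} {L t : ℝ} (hL : 0 < L)
    (hγ : IsGeodesicOn γ 0 L) (ht : t ∈ Icc 0 L) {z : X} {a b : ℝ} (ha0 : 0 ≤ a)
    (ha : a ≤ dist z (γ 0)) (hb0 : 0 ≤ b) (hb : b ≤ dist z (γ L)) :
    ((1 - t / L) * a + t / L * b) ^ 2 - t * (L - t) ≤ dist z (γ t) ^ 2 := by
  have hl0 : 0 ≤ t / L := div_nonneg ht.1 hL.le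
  have hl1 : 0 ≤ 1 - t / L := sub_nonneg.2 ((div_le_one hL).2 ht.2)
  have hcv := hcurv γ 0 L hL hγ z t ht
  simp only [sub_zero] at hcv
  have hjensen : ((1 - t / L) * a + t / L * b) ^ 2
      = (1 - t / L) * a ^ 2 + t / L * b ^ 2 - t / L * (1 - t / L) * (a - b) ^ 2 := by ring
  linarith [mul_nonneg (mul_nonneg hl0 hl1) (sq_nonneg (a - b)),
    mul_le_mul_of_nonneg_left (pow_le_pow_left₀ ha0 ha 2) hl1,
    mul_le_mul_of_nonneg_left (pow_le_pow_left₀ hb0 hb 2) hl0]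

variable {x₀ : X}

theorem sub_infDist_sphere_le_of_isGeodesicOn [ProperSpace X] (hcurv : NonnegCurv X)
    (hsp : ∀ T, 0 ≤ T → (sphere x₀ T).Nonempty) {γ : ℝ → X} {L t : ℝ} (hL : 0 < L)
    (hγ : IsGeodesicOn γ 0 L) (ht : t ∈ Icc 0 L) {C T : ℝ} (hC0 : dist x₀ (γ 0) ≤ C)
    (hCL : dist x₀ (γ L) ≤ C) (hT : C < T) :
    T - infDist (γ t) (sphere x₀ T) ≤
      (1 - t / L) * (T - infDist (γ 0) (sphere x₀ T)) +
        t / L * (T - infDist (γ L) (sphere x₀ T)) + t * (L - t) / (T - C) := by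
  have hne := hsp T (dist_nonneg.trans (hC0.trans hT.le))
  obtain ⟨z, hz, hdz⟩ := isClosed_sphere.exists_infDist_eq_dist hne (γ t)
  set S := sphere x₀ T
  have hDa : T - C ≤ infDist (γ 0) S := by
    linarith [sub_dist_le_infDist_sphere (y := γ 0) hne]
  have hDb : T - C ≤ infDist (γ L) S := by
    linarith [sub_dist_le_infDist_sphere (y := γ L) hne]
  have hl0 : 0 ≤ t / L := div_nonneg ht.1 hL.le
  have hl1 : 0 ≤ 1 - t / L := sub_nonneg.2 ((div_le_one hL).2 ht.2)
  set M := (1 - t / L) * infDist (γ 0) S + t / L * infDist (γ L) S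
  have hMT : T - C ≤ M := by
    linarith [mul_le_mul_of_nonneg_left hDa hl1, mul_le_mul_of_nonneg_left hDb hl0]
  have hK : 0 ≤ t * (L - t) := mul_nonneg ht.1 (sub_nonneg.2 ht.2)
  have hsq := hcurv.sq_sub_le_dist_sq hL hγ ht infDist_nonneg
    (dist_comm z (γ 0) ▸ infDist_le_dist_of_mem hz) infDist_nonneg
    (dist_comm z (γ L) ▸ infDist_le_dist_of_mem hz)
  rw [dist_comm, ← hdz] at hsq
  have hM := sub_div_le_of_sq_sub_le (by linarith) hK infDist_nonneg hsq
  have hKM : t * (L - t) / M ≤ t * (L - t) / (T - C) :=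
    div_le_div_of_nonneg_left hK (by linarith) hMT
  have hcomb : (1 - t / L) * (T - infDist (γ 0) S) + t / L * (T - infDist (γ L) S) = T - M := by
    ring
  linarith

variable {f : X → ℝ}

theorem map_le_of_isGeodesicOn [ProperSpace X] (hcurv : NonnegCurv X)
    (hsp : ∀ T, 0 ≤ T → (sphere x₀ T).Nonempty)
    (hf : ∀ x, Tendsto (fun t : ℝ => t - infDist x (sphere x₀ t)) atTop (𝓝 (f x)))
    {γ : ℝ → X} {L t : ℝ} (hL : 0 < L) (hγ : IsGeodesicOn γ 0 L) (ht : t ∈ Icc 0 L) :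
    f (γ t) ≤ (1 - t / L) * f (γ 0) + t / L * f (γ L) := by
  set C := max (dist x₀ (γ 0)) (dist x₀ (γ L))
  have herr : Tendsto (fun T : ℝ => t * (L - t) / (T - C)) atTop (𝓝 0) :=
    tendsto_const_nhds.div_atTop ((tendsto_atTop_add_const_right atTop (-C) tendsto_id).congr
      fun T => (sub_eq_add_neg T C).symm)
  have hlim := (((hf (γ 0)).const_mul (1 - t / L)).add ((hf (γ L)).const_mul (t / L))).add herr
  rw [add_zero] at hlim
  exact le_of_tendsto_of_tendsto (hf (γ t)) hlim ((eventually_gt_atTop C).mono fun T hT =>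
    sub_infDist_sphere_le_of_isGeodesicOn hcurv hsp hL hγ ht (le_max_left _ _)
      (le_max_right _ _) hT)

theorem isGeodesicallyStarShaped_preimage_Iic [ProperSpace X] (hcurv : NonnegCurv X)
    (hsp : ∀ T, 0 ≤ T → (sphere x₀ T).Nonempty)
    (hf : ∀ x, Tendsto (fun t : ℝ => t - infDist x (sphere x₀ t)) atTop (𝓝 (f x)))
    {c : ℝ} (hc : f x₀ ≤ c) : IsGeodesicallyStarShaped (f ⁻¹' Iic c) x₀ := by
  intro γ L hγ hγ0 hγL t ht
  rcases ht.1.eq_or_lt with rfl | ht0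
  · rwa [mem_preimage, hγ0]
  have hL : 0 < L := ht0.trans_le ht.2
  have hl0 : 0 ≤ t / L := div_nonneg ht.1 hL.le
  have hl1 : 0 ≤ 1 - t / L := sub_nonneg.2 ((div_le_one hL).2 ht.2)
  calc f (γ t) ≤ (1 - t / L) * f (γ 0) + t / L * f (γ L) :=
        map_le_of_isGeodesicOn hcurv hsp hf hL hγ ht
    _ ≤ (1 - t / L) * c + t / L * c :=
        add_le_add (mul_le_mul_of_nonneg_left (hγ0 ▸ hc) hl1) (mul_le_mul_of_nonneg_left hγL hl0)
    _ = c := by ring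

theorem IsGeodesicallyStarShaped.exists_isGeodesicOn_subset {s : Set X}
    (hgeo : ∀ x y : X, ∃ γ : ℝ → X,
      IsGeodesicOn γ 0 (dist x y) ∧ γ 0 = x ∧ γ (dist x y) = y)
    (hstar : IsGeodesicallyStarShaped s x₀) (hs : ¬ Bornology.IsBounded s) (n : ℕ) :
    ∃ γ : ℝ → X, IsGeodesicOn γ 0 n ∧ γ 0 = x₀ ∧ ∀ t ∈ Icc 0 (n : ℝ), γ t ∈ s := by
  obtain ⟨y, hys, hy⟩ : ∃ y ∈ s, (n : ℝ) ≤ dist x₀ y := by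
    by_contra! h
    exact hs ((isBounded_closedBall (x := x₀) (r := n)).subset
      fun y hy => mem_closedBall'.2 (h y hy).le)
  obtain ⟨γ, hγ, hγ0, hγy⟩ := hgeo x₀ y
  exact ⟨γ, hγ.mono le_rfl hy, hγ0,
    fun t ht => hstar γ _ hγ hγ0 (by rwa [hγy]) t ⟨ht.1, ht.2.trans hy⟩⟩

theorem exists_isDiscreteRay_subset [ProperSpace X] {s : Set X} (hs : IsClosed s)
    (hseg : ∀ n : ℕ, ∃ γ : ℝ → X, IsGeodesicOn γ 0 n ∧ γ 0 = x₀ ∧ ∀ t ∈ Icc 0 (n : ℝ), γ t ∈ s) :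
    ∃ φ : ℕ → X, φ 0 = x₀ ∧ IsDiscreteRay φ ∧ ∀ k, φ k ∈ s := by
  choose γ hγ hγ0 hγs using hseg
  have hmin : ∀ n k : ℕ, min (k : ℝ) n ∈ Icc 0 (n : ℝ) :=
    fun n k => ⟨le_min k.cast_nonneg n.cast_nonneg, min_le_right _ _⟩
  set u : ℕ → ℕ → X := fun n k => γ n (min (k : ℝ) n)
  have hu : ∀ n j k : ℕ, j ≤ n → k ≤ n → dist (u n j) (u n k) = |(j : ℝ) - k| := by
    intro n j k hj hk
    simp only [u, min_eq_left (Nat.cast_le.2 hj), min_eq_left (Nat.cast_le.2 hk)]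
    exact hγ n j ⟨j.cast_nonneg, Nat.cast_le.2 hj⟩ k ⟨k.cast_nonneg, Nat.cast_le.2 hk⟩
  have hmem : ∀ n, u n ∈ univ.pi fun k : ℕ => closedBall x₀ (k : ℝ) ∩ s := fun n k _ =>
    ⟨mem_closedBall'.2 ((hγ0 n ▸ (hγ n).dist_apply_zero (hmin n k)).trans_le (min_le_left _ _)),
      hγs n _ (hmin n k)⟩
  obtain ⟨φ, hφ, σ, hσ, hlim⟩ :=
    (isCompact_univ_pi fun k : ℕ => (isCompact_closedBall x₀ (k : ℝ)).inter_right hs).tendsto_subseq hmem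
  have hlimk : ∀ k, Tendsto (fun n => u (σ n) k) atTop (𝓝 (φ k)) := tendsto_pi_nhds.1 hlim
  refine ⟨φ, tendsto_nhds_unique (hlimk 0) ?_, fun j k => ?_, fun k => (hφ k trivial).2⟩
  · simp only [u, Nat.cast_zero, min_eq_left (Nat.cast_nonneg _), hγ0, tendsto_const_nhds]
  · refine tendsto_nhds_unique ((hlimk j).dist (hlimk k)) (tendsto_const_nhds.congr' ?_)
    filter_upwards [eventually_ge_atTop (max j k)] with n hn
    have hσn := (max_le_iff.1 (hn.trans (hσ.id_le n)))
    exact (hu (σ n) j k hσn.1 hσn.2).symm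

theorem natCast_le_of_isDiscreteRay
    (hf : ∀ x, Tendsto (fun t : ℝ => t - infDist x (sphere x₀ t)) atTop (𝓝 (f x)))
    {φ : ℕ → X} (hφ0 : φ 0 = x₀) (hφ : IsDiscreteRay φ) (m : ℕ) : (m : ℝ) ≤ f (φ m) := by
  refine ge_of_tendsto ((hf (φ m)).comp tendsto_natCast_atTop_atTop) ?_
  filter_upwards [eventually_ge_atTop m] with k hk
  have hmk : |(m : ℝ) - k| = k - m := by
    rw [abs_sub_comm, abs_of_nonneg (sub_nonneg.2 (Nat.cast_le.2 hk))]
  have hφk : φ k ∈ sphere x₀ k := by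
    rw [mem_sphere', ← hφ0, hφ, Nat.cast_zero, zero_sub, abs_neg, abs_of_nonneg k.cast_nonneg]
  have := infDist_le_dist_of_mem hφk (x := φ m)
  rw [hφ, hmk] at this
  simp only [Function.comp_apply]
  linarith

end

/-- On an open (complete, noncompact, boundaryless) nonnegatively curved space,
every sublevel set `Ω_c = f⁻¹((-∞,c])` with `c ≥ f(x₀)` of the Cheeger–Gromoll
function `f(x) = lim_{t→∞}[t - d(x, ∂B(x₀,t))]` is compact. -/
theorem cheegerGromoll_sublevel_compact
    {X : Type*} [MetricSpace X] [ProperSpace X]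
    (hnoncompact : ¬ CompactSpace X)
    (hgeo : ∀ x y : X, ∃ γ : ℝ → X,
      IsGeodesicOn γ 0 (dist x y) ∧ γ 0 = x ∧ γ (dist x y) = y)
    (hcurv : NonnegCurv X)
    (x₀ : X) (f : X → ℝ)
    (hf : ∀ x : X,
      Tendsto (fun t : ℝ => t - infDist x (sphere x₀ t)) atTop (nhds (f x))) :
    ∀ c : ℝ, f x₀ ≤ c → IsCompact (f ⁻¹' Set.Iic c) := by
  intro c hc
  have hsp : ∀ T, 0 ≤ T → (sphere x₀ T).Nonempty :=
    fun _ hT => sphere_nonempty_of_geodesic hnoncompact hgeo x₀ hT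
  have hclosed : IsClosed (f ⁻¹' Iic c) :=
    isClosed_Iic.preimage (lipschitzWith_one_of_tendsto_sub_infDist_sphere x₀ hf).continuous
  refine isCompact_of_isClosed_isBounded hclosed ?_
  by_contra hunbounded
  obtain ⟨φ, hφ0, hφ, hφc⟩ := exists_isDiscreteRay_subset hclosed
    ((isGeodesicallyStarShaped_preimage_Iic hcurv hsp hf hc).exists_isGeodesicOn_subset
      hgeo hunbounded)
  have hbusemann := natCast_le_of_isDiscreteRay hf hφ0 hφ (⌈c⌉₊ + 1)
  have hle : f (φ (⌈c⌉₊ + 1)) ≤ c := hφc _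
  push_cast at hbusemann
  linarith [Nat.le_ceil c]
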